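/- arXiv:2502.02898 — 3 statements merged into one kernel-verified Lean document; each statement's English description precedes it below -/
import Mathlib

section
/- Let f be in the class BT_B with Taylor coefficients a_n, and let γ_1 = a_2/2 be its first logarithmic coefficient. Then |γ_1| ≤ 1/8. -/
open Complex Metric

/-- Principal branch of the square root: `w^(1/2) = exp((1/2) * Log w)`. -/
noncomputable def psqrt (w : ℂ) : ℂ := Complex.exp ((1/2 : ℂ) * Complex.log w)

/-- The `n`-th Taylor coefficient of `f` at `0`, i.e. `f^(n)(0)/n!`. -/
noncomputable def tCoeff (f : ℂ → ℂ) (n : ℕ) : ℂ := iteratedDeriv n f 0 / n.factorial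

/-- The class `BT_B` of bounded turning functions associated with the bean-shaped domain:
`f` is analytic on the unit disk, `f 0 = 0`, `f' 0 = 1`, `f` injective on the disk,
and `f'(z) = (1 + tanh (ω z))^(1/2)` for a Schwarz function `ω`. -/
def IsBTB (f : ℂ → ℂ) : Prop :=
  AnalyticOnNhd ℂ f (ball 0 1) ∧ f 0 = 0 ∧ deriv f 0 = 1 ∧
  Set.InjOn f (ball 0 1) ∧
  ∃ ω : ℂ → ℂ, AnalyticOnNhd ℂ ω (ball 0 1) ∧ ω 0 = 0 ∧
    (∀ z ∈ ball (0:ℂ) 1, ‖ω z‖ < 1) ∧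
    (∀ z ∈ ball (0:ℂ) 1, deriv f z = psqrt (1 + Complex.tanh (ω z)))

open Filter Topology

/- Since `ω(0) = 0`, differentiating `f' = (1 + tanh ∘ ω)^{1/2}` at `0` gives
`2 a₂ = f''(0) = ω'(0) / 2`, so `γ₁ = a₂ / 2 = ω'(0) / 8`, and the Schwarz lemma gives
`|ω'(0)| ≤ 1`. -/

theorem Complex.hasDerivAt_tanh {x : ℂ} (hx : cosh x ≠ 0) :
    HasDerivAt tanh (1 / cosh x ^ 2) x := by
  have htanh : tanh = sinh / cosh := funext tanh_eq_sinh_div_cosh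
  rw [htanh, ← cosh_sq_sub_sinh_sq x]
  exact ((hasDerivAt_sinh x).div (hasDerivAt_cosh x) hx).congr_deriv (by ring)

theorem hasDerivAt_psqrt {w : ℂ} (hw : w ∈ slitPlane) :
    HasDerivAt psqrt (psqrt w / (2 * w)) w := by
  refine ((hasDerivAt_log hw).const_mul (1 / 2 : ℂ)).cexp.congr_deriv ?_
  rw [psqrt]
  field_simp [slitPlane_ne_zero hw]

theorem psqrt_one : psqrt 1 = 1 := by
  simp [psqrt]

theorem hasDerivAt_psqrt_one_add_tanh_comp {ω : ℂ → ℂ} {d z₀ : ℂ}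
    (hω : HasDerivAt ω d z₀) (hωz₀ : ω z₀ = 0) :
    HasDerivAt (fun z => psqrt (1 + tanh (ω z))) (d / 2) z₀ := by
  have htanh : HasDerivAt tanh 1 (ω z₀) := by
    simpa [hωz₀] using Complex.hasDerivAt_tanh (x := 0) (by simp)
  have hsqrt : HasDerivAt psqrt (1 / 2) (1 + tanh (ω z₀)) := by
    simpa [hωz₀, psqrt_one] using hasDerivAt_psqrt one_mem_slitPlane
  refine (hsqrt.comp z₀ ((htanh.comp z₀ hω).const_add 1)).congr_deriv ?_
  ring

theorem tCoeff_two_of_deriv_eventuallyEq {f g : ℂ → ℂ} {c : ℂ}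
    (hfg : deriv f =ᶠ[𝓝 0] g) (hg : HasDerivAt g c 0) :
    tCoeff f 2 = c / 2 := by
  rw [tCoeff, iteratedDeriv_succ, iteratedDeriv_one, hfg.deriv_eq, hg.deriv]
  norm_num

theorem norm_deriv_zero_le_one_of_norm_lt_one {ω : ℂ → ℂ}
    (hω : DifferentiableOn ℂ ω (ball 0 1)) (hω0 : ω 0 = 0)
    (hωlt : ∀ z ∈ ball (0 : ℂ) 1, ‖ω z‖ < 1) :
    ‖deriv ω 0‖ ≤ 1 :=
  norm_deriv_le_one_of_mapsTo_ball hω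
    (fun z hz => by simpa [hω0] using (hωlt z hz).le) one_pos

theorem BTB_gamma1_bound (f : ℂ → ℂ) (hf : IsBTB f) :
    ‖tCoeff f 2 / 2‖ ≤ 1/8 := by
  obtain ⟨-, -, -, -, ω, hωa, hω0, hωlt, hfω⟩ := hf
  have h0 : (0 : ℂ) ∈ ball (0 : ℂ) 1 := mem_ball_self one_pos
  have ha₂ : tCoeff f 2 = deriv ω 0 / 2 / 2 :=
    tCoeff_two_of_deriv_eventuallyEq (eventuallyEq_of_mem (isOpen_ball.mem_nhds h0) hfω)
      (hasDerivAt_psqrt_one_add_tanh_comp (hωa 0 h0).differentiableAt.hasDerivAt hω0)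
  have hSchwarz : ‖deriv ω 0‖ ≤ 1 :=
    norm_deriv_zero_le_one_of_norm_lt_one hωa.differentiableOn hω0 hωlt
  rw [ha₂, norm_div, norm_div, norm_div]
  norm_num
  linarith
end

section
/- Let f be in the class BT_B with Taylor coefficients a_n, and let γ_2 = (1/2)(a_3 − a_2²/2) be its second logarithmic coefficient. Then |γ_2| ≤ 1/12. -/
open Complex Metric

/-!
Write `ω(z) = c₁ z + c₂ z² + ⋯`. Since `G(w) = (1 + tanh w)^(1/2)` satisfies
`G' = G (1 - tanh w) / 2`, we get `G(0) = 1`, `G'(0) = 1/2`, `G''(0) = -1/4`, and comparing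
coefficients in `f' = G ∘ ω` gives `a₂ = c₁ / 4`, `a₃ = c₂ / 6 - c₁² / 24`, hence
`γ₂ = c₂ / 12 - 7 c₁² / 192`. The Schwarz–Pick lemma applied to `ω(z) / z` gives
`|c₂| ≤ 1 - |c₁|²`, so `|γ₂| ≤ (1 - |c₁|²) / 12 + 7 |c₁|² / 192 ≤ 1/12`.
-/

open Filter Topology Set ComplexConjugate

lemma one_sub_conj_mul_ne_zero {a w : ℂ} (ha : ‖a‖ < 1) (hw : ‖w‖ ≤ 1) :
    1 - conj a * w ≠ 0 := by
  intro h
  have : ‖conj a * w‖ = 1 := by rw [← sub_eq_zero.mp h, norm_one]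
  rw [norm_mul, norm_conj] at this
  nlinarith [norm_nonneg a, norm_nonneg w]

lemma norm_sub_le_norm_one_sub_conj_mul {a w : ℂ} (ha : ‖a‖ < 1) (hw : ‖w‖ ≤ 1) :
    ‖w - a‖ ≤ ‖1 - conj a * w‖ := by
  have key : normSq (1 - conj a * w) - normSq (w - a) = (1 - normSq a) * (1 - normSq w) := by
    simp only [normSq_apply, sub_re, sub_im, mul_re, mul_im, conj_re, conj_im, one_re, one_im]
    ring
  have ha' : normSq a ≤ 1 := by rw [normSq_eq_norm_sq]; nlinarith [norm_nonneg a]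
  have hw' : normSq w ≤ 1 := by rw [normSq_eq_norm_sq]; nlinarith [norm_nonneg w]
  rw [norm_def, norm_def]
  exact Real.sqrt_le_sqrt (by nlinarith)

/-- The Schwarz–Pick lemma at the origin. -/
theorem norm_deriv_le_one_sub_norm_sq {φ : ℂ → ℂ} (hφ : DifferentiableOn ℂ φ (ball 0 1))
    (h_maps : MapsTo φ (ball 0 1) (closedBall 0 1)) :
    ‖deriv φ 0‖ ≤ 1 - ‖φ 0‖ ^ 2 := by
  have h0 : (0 : ℂ) ∈ ball (0 : ℂ) 1 := mem_ball_self one_pos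
  have hφle : ∀ z ∈ ball (0 : ℂ) 1, ‖φ z‖ ≤ 1 := fun z hz =>
    mem_closedBall_zero_iff.mp (h_maps hz)
  rcases (hφle 0 h0).lt_or_eq with ha | ha
  · set a := φ 0 with ha_def
    have hden : ∀ z ∈ ball (0 : ℂ) 1, 1 - conj a * φ z ≠ 0 := fun z hz =>
      one_sub_conj_mul_ne_zero ha (hφle z hz)
    -- compose with the disc automorphism `w ↦ (w - a) / (1 - ā w)`, which sends `a` to `0`
    set ψ : ℂ → ℂ := fun z => (φ z - a) / (1 - conj a * φ z)
    have hψd : DifferentiableOn ℂ ψ (ball 0 1) := fun z hz =>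
      ((hφ z hz).sub_const a).div ((hφ z hz).const_mul _ |>.const_sub 1) (hden z hz)
    have hψ_maps : MapsTo ψ (ball 0 1) (closedBall (ψ 0) 1) := by
      intro z hz
      rw [show ψ 0 = 0 by simp [ψ, ← ha_def], mem_closedBall_zero_iff, norm_div]
      exact div_le_one_of_le₀ (norm_sub_le_norm_one_sub_conj_mul ha (hφle z hz)) (norm_nonneg _)
    have hψ' : HasDerivAt ψ (deriv φ 0 / (1 - conj a * a)) 0 := by
      have hφ' : HasDerivAt φ (deriv φ 0) 0 :=
        (hφ.differentiableAt (isOpen_ball.mem_nhds h0)).hasDerivAt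
      refine ((hφ'.sub_const a).fun_div ((hφ'.const_mul (conj a)).const_sub 1)
        (hden 0 h0)).congr_deriv ?_
      rw [← ha_def, sub_self, zero_mul, sub_zero, sq, mul_div_mul_right _ _ (hden 0 h0)]
    have hconj : 1 - conj a * a = ((1 - ‖a‖ ^ 2 : ℝ) : ℂ) := by
      rw [conj_mul']; push_cast; ring
    have hpos : 0 < 1 - ‖a‖ ^ 2 := by nlinarith [norm_nonneg a]
    have := norm_deriv_le_one_of_mapsTo_ball hψd hψ_maps one_pos
    rwa [hψ'.deriv, hconj, norm_div, norm_real, Real.norm_of_nonneg hpos.le, div_le_one hpos]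
      at this
  · -- maximum modulus principle: `φ` is constant near `0`
    have hmax : IsLocalMax (norm ∘ φ) 0 :=
      mem_of_superset (isOpen_ball.mem_nhds h0) fun z hz => by
        simpa [ha] using hφle z hz
    have hconst : φ =ᶠ[𝓝 0] fun _ => φ 0 := eventually_eq_of_isLocalMax_norm
      (hφ.eventually_differentiableAt (isOpen_ball.mem_nhds h0)) hmax
    rw [hconst.deriv_eq, deriv_const, ha]
    norm_num

theorem norm_deriv_deriv_le_of_mapsTo_ball {ω : ℂ → ℂ}
    (hω : DifferentiableOn ℂ ω (ball 0 1)) (hω0 : ω 0 = 0)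
    (h_maps : MapsTo ω (ball 0 1) (ball 0 1)) :
    ‖deriv (deriv ω) 0‖ ≤ 2 * (1 - ‖deriv ω 0‖ ^ 2) := by
  have hball : ball (0 : ℂ) 1 ∈ 𝓝 0 := isOpen_ball.mem_nhds (mem_ball_self one_pos)
  set φ := dslope ω 0
  have hφ : DifferentiableOn ℂ φ (ball 0 1) := (differentiableOn_dslope hball).mpr hω
  have hφ_maps : MapsTo φ (ball 0 1) (closedBall 0 1) := fun z hz => by
    simpa using norm_dslope_le_div_of_mapsTo_ball hω
      (by simpa [hω0] using h_maps.mono_right ball_subset_closedBall) hz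
  have hωφ : ω = fun z => z * φ z := funext fun z => by
    simpa [hω0] using (sub_smul_dslope ω 0 z).symm
  have hφ' : ∀ᶠ z in 𝓝 0, HasDerivAt φ (deriv φ z) z :=
    (hφ.eventually_differentiableAt hball).mono fun z hz => hz.hasDerivAt
  have hω' : deriv ω =ᶠ[𝓝 0] fun z => φ z + z * deriv φ z :=
    hφ'.mono fun z hz => by rw [hωφ, ((hasDerivAt_id' z).fun_mul hz).deriv, one_mul]
  have hφ'' : HasDerivAt (deriv φ) (deriv (deriv φ) 0) 0 :=
    ((hφ.analyticOnNhd isOpen_ball).deriv 0 (mem_ball_self one_pos)).differentiableAt.hasDerivAt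
  have hω'' : deriv (deriv ω) 0 = 2 * deriv φ 0 := by
    rw [hω'.deriv_eq, (hφ'.self_of_nhds.fun_add ((hasDerivAt_id' 0).fun_mul hφ'')).deriv]
    ring
  have hφ0 : φ 0 = deriv ω 0 := dslope_same ω 0
  rw [hω'', norm_mul, Complex.norm_two, ← hφ0]
  gcongr
  exact norm_deriv_le_one_sub_norm_sq hφ hφ_maps

section ChainRule

variable {𝕜 : Type*} [NontriviallyNormedField 𝕜] {f G ω : 𝕜 → 𝕜} {c : 𝕜}

theorem iteratedDeriv_two_eq_of_deriv_eventuallyEq_comp (hG : DifferentiableAt 𝕜 G (ω c))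
    (hω : DifferentiableAt 𝕜 ω c) (hf : deriv f =ᶠ[𝓝 c] G ∘ ω) :
    iteratedDeriv 2 f c = deriv G (ω c) * deriv ω c := by
  rw [iteratedDeriv_succ, iteratedDeriv_one, hf.deriv_eq, deriv_comp c hG hω]

theorem iteratedDeriv_three_eq_of_deriv_eventuallyEq_comp [CompleteSpace 𝕜]
    (hG : AnalyticAt 𝕜 G (ω c)) (hω : AnalyticAt 𝕜 ω c)
    (hf : deriv f =ᶠ[𝓝 c] G ∘ ω) :
    iteratedDeriv 3 f c =
      deriv (deriv G) (ω c) * deriv ω c ^ 2 + deriv G (ω c) * deriv (deriv ω) c := by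
  have hf' : deriv (deriv f) =ᶠ[𝓝 c] fun z => deriv G (ω z) * deriv ω z := by
    have hGω : ∀ᶠ z in 𝓝 c, AnalyticAt 𝕜 G (ω z) :=
      hω.continuousAt.tendsto.eventually hG.eventually_analyticAt
    filter_upwards [hf.deriv, hGω, hω.eventually_analyticAt] with z hz hGz hωz
    rw [hz, deriv_comp z hGz.differentiableAt hωz.differentiableAt]
  have hG' : HasDerivAt (fun z => deriv G (ω z)) _ c :=
    hG.deriv.differentiableAt.hasDerivAt.comp c hω.differentiableAt.hasDerivAt
  rw [iteratedDeriv_succ, iteratedDeriv_succ, iteratedDeriv_one, hf'.deriv_eq,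
    (hG'.fun_mul hω.deriv.differentiableAt.hasDerivAt).deriv]
  ring

end ChainRule

theorem Complex.hasDerivAt_tanh_s1 {w : ℂ} (h : cosh w ≠ 0) :
    HasDerivAt tanh (1 - tanh w ^ 2) w := by
  have htanh : tanh = fun z => sinh z / cosh z := funext tanh_eq_sinh_div_cosh
  rw [htanh]
  refine ((hasDerivAt_sinh w).fun_div (hasDerivAt_cosh w) h).congr_deriv ?_
  field_simp

noncomputable def sqrtOneAddTanh (w : ℂ) : ℂ := psqrt (1 + tanh w)

theorem hasDerivAt_sqrtOneAddTanh {w : ℂ} (hc : cosh w ≠ 0) (hs : 1 + tanh w ∈ slitPlane) :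
    HasDerivAt sqrtOneAddTanh (sqrtOneAddTanh w * (1 - tanh w) / 2) w := by
  have hlog := (hasDerivAt_log hs).comp w ((hasDerivAt_tanh_s1 hc).const_add 1)
  refine ((hlog.const_mul (1 / 2 : ℂ)).cexp).congr_deriv ?_
  have hne : 1 + tanh w ≠ 0 := slitPlane_ne_zero hs
  rw [sqrtOneAddTanh, psqrt, Function.comp_apply]
  field_simp
  ring

theorem eventually_hasDerivAt_sqrtOneAddTanh :
    ∀ᶠ w in 𝓝 0, HasDerivAt sqrtOneAddTanh (sqrtOneAddTanh w * (1 - tanh w) / 2) w := by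
  have hc : ∀ᶠ w in 𝓝 (0 : ℂ), cosh w ≠ 0 :=
    continuous_cosh.continuousAt.eventually_ne (by simp)
  have htanh : ContinuousAt tanh 0 := by
    have : AnalyticAt ℂ (fun z => sinh z / cosh z) 0 :=
      analyticAt_sinh.div analyticAt_cosh (by simp)
    simpa [← tanh_eq_sinh_div_cosh] using this.continuousAt
  have hs : ∀ᶠ w in 𝓝 (0 : ℂ), 1 + tanh w ∈ slitPlane :=
    (continuousAt_const.add htanh).eventually_mem (isOpen_slitPlane.mem_nhds (by simp))
  filter_upwards [hc, hs] with w hcw hsw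
  exact hasDerivAt_sqrtOneAddTanh hcw hsw

theorem analyticAt_sqrtOneAddTanh : AnalyticAt ℂ sqrtOneAddTanh 0 :=
  analyticAt_iff_eventually_differentiableAt.mpr <|
    eventually_hasDerivAt_sqrtOneAddTanh.mono fun _ h => h.differentiableAt

theorem sqrtOneAddTanh_zero : sqrtOneAddTanh 0 = 1 := by
  simp [sqrtOneAddTanh, psqrt]

theorem deriv_sqrtOneAddTanh_eventuallyEq :
    deriv sqrtOneAddTanh =ᶠ[𝓝 0] fun w => sqrtOneAddTanh w * (1 - tanh w) / 2 :=
  eventually_hasDerivAt_sqrtOneAddTanh.mono fun _ h => h.deriv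

theorem deriv_sqrtOneAddTanh_zero : deriv sqrtOneAddTanh 0 = 1 / 2 := by
  rw [deriv_sqrtOneAddTanh_eventuallyEq.eq_of_nhds, sqrtOneAddTanh_zero, tanh_zero]
  norm_num

theorem deriv_deriv_sqrtOneAddTanh_zero : deriv (deriv sqrtOneAddTanh) 0 = -1 / 4 := by
  have hG : HasDerivAt sqrtOneAddTanh (1 / 2) 0 := by
    simpa [sqrtOneAddTanh_zero] using eventually_hasDerivAt_sqrtOneAddTanh.self_of_nhds
  have htanh : HasDerivAt tanh 1 0 := by simpa using hasDerivAt_tanh_s1 (w := 0) (by simp)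
  rw [deriv_sqrtOneAddTanh_eventuallyEq.deriv_eq,
    ((hG.fun_mul (htanh.const_sub 1)).div_const 2).deriv, sqrtOneAddTanh_zero, tanh_zero]
  norm_num

theorem BTB_gamma2_bound (f : ℂ → ℂ) (hf : IsBTB f) :
    ‖(1/2) * (tCoeff f 3 - (tCoeff f 2)^2 / 2)‖ ≤ 1/12 := by
  obtain ⟨-, -, -, -, ω, hωa, hω0, hωb, hfd⟩ := hf
  have hf' : deriv f =ᶠ[𝓝 0] sqrtOneAddTanh ∘ ω :=
    eventually_of_mem (ball_mem_nhds 0 one_pos) hfd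
  have hω := hωa 0 (mem_ball_self one_pos)
  have hG : AnalyticAt ℂ sqrtOneAddTanh (ω 0) := by
    rw [hω0]; exact analyticAt_sqrtOneAddTanh
  have ha₂ : tCoeff f 2 = deriv ω 0 / 4 := by
    rw [tCoeff, iteratedDeriv_two_eq_of_deriv_eventuallyEq_comp hG.differentiableAt
      hω.differentiableAt hf', hω0, deriv_sqrtOneAddTanh_zero]
    norm_num [Nat.factorial]
    ring
  have ha₃ : tCoeff f 3 = deriv (deriv ω) 0 / 12 - deriv ω 0 ^ 2 / 24 := by
    rw [tCoeff, iteratedDeriv_three_eq_of_deriv_eventuallyEq_comp hG hω hf', hω0,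
      deriv_sqrtOneAddTanh_zero, deriv_deriv_sqrtOneAddTanh_zero]
    norm_num [Nat.factorial]
    ring
  have hc : ‖deriv (deriv ω) 0‖ ≤ 2 * (1 - ‖deriv ω 0‖ ^ 2) :=
    norm_deriv_deriv_le_of_mapsTo_ball hωa.differentiableOn hω0
      fun z hz => mem_ball_zero_iff.mpr (hωb z hz)
  calc ‖(1/2) * (tCoeff f 3 - (tCoeff f 2)^2 / 2)‖
      = ‖deriv (deriv ω) 0 / 24 - 7 / 192 * deriv ω 0 ^ 2‖ := by rw [ha₂, ha₃]; ring_nf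
    _ ≤ ‖deriv (deriv ω) 0‖ / 24 + 7 / 192 * ‖deriv ω 0‖ ^ 2 := by
      refine (norm_sub_le _ _).trans_eq ?_
      simp
    _ ≤ 1 / 12 := by nlinarith [sq_nonneg ‖deriv ω 0‖]
end

section
/- Let f be in the class BT_B with Taylor coefficients a_n. Then the Zalcman functional satisfies |a_2·a_3 − a_4| ≤ 1/8. -/
open Complex Metric

/-!
Squaring `f' = (1 + tanh ω)^(1/2)` shows that `q = f'² - 1` equals `tanh ω`, so
`q' = (1 - q²) ω'`; the derivatives of this identity at `0` up to order two express `a₂a₃ - a₄`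
through the Taylor coefficients `c₁, c₂, c₃` of `ω` as `5/48 c₁c₂ + c₁³/64 - c₃/8`. Since
`|ω| < 1` on the disk, Parseval's identity on the circles `|z| = r < 1` gives
`|c₁|² + |c₂|² + |c₃|² ≤ 1`, and under this constraint `5/48 xy + x³/64 + z/8 ≤ 1/8` for `x ≥ 0`.
-/

open Filter Topology Finset Real MeasureTheory
open scoped Nat

section Leibniz

variable {𝕜 : Type*} [NontriviallyNormedField 𝕜] [CompleteSpace 𝕜]

theorem AnalyticAt.iteratedDeriv_sq {g : 𝕜 → 𝕜} {x : 𝕜} (hg : AnalyticAt 𝕜 g x) :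
    iteratedDeriv 1 (fun z => g z ^ 2) x = 2 * g x * iteratedDeriv 1 g x ∧
    iteratedDeriv 2 (fun z => g z ^ 2) x =
      2 * iteratedDeriv 1 g x ^ 2 + 2 * g x * iteratedDeriv 2 g x ∧
    iteratedDeriv 3 (fun z => g z ^ 2) x =
      6 * iteratedDeriv 1 g x * iteratedDeriv 2 g x + 2 * g x * iteratedDeriv 3 g x := by
  have hleib (n : ℕ) := iteratedDeriv_fun_mul (n := n) hg.contDiffAt hg.contDiffAt
  simp only [sq, hleib, sum_range_succ, sum_range_zero, Nat.choose_succ_self_right,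
    Nat.choose_zero_right, Nat.choose_self, Nat.choose_one_right, Nat.reduceSub, Nat.reduceAdd,
    Nat.cast_ofNat, Nat.cast_one, iteratedDeriv_zero, zero_add]
  refine ⟨by ring, by ring, by ring⟩

theorem iteratedDeriv_eq_of_deriv_eq_one_sub_sq_mul_deriv {q w : 𝕜 → 𝕜} {x : 𝕜}
    (hq : AnalyticAt 𝕜 q x) (hw : AnalyticAt 𝕜 w x) (hqx : q x = 0)
    (hode : deriv q =ᶠ[𝓝 x] fun z => (1 - q z ^ 2) * deriv w z) :
    iteratedDeriv 1 q x = iteratedDeriv 1 w x ∧ iteratedDeriv 2 q x = iteratedDeriv 2 w x ∧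
      iteratedDeriv 3 q x = iteratedDeriv 3 w x - 2 * iteratedDeriv 1 w x ^ 3 := by
  have hleib (k : ℕ) : iteratedDeriv (k + 1) q x = ∑ i ∈ range (k + 1),
      k.choose i * iteratedDeriv i (fun z => 1 - q z ^ 2) x * iteratedDeriv (k - i + 1) w x := by
    rw [iteratedDeriv_succ', hode.iteratedDeriv_eq, iteratedDeriv_fun_mul
      (contDiffAt_const.sub (hq.contDiffAt.pow 2)) hw.deriv.contDiffAt]
    simp only [iteratedDeriv_succ']
  obtain ⟨hq1, hq2, -⟩ := hq.iteratedDeriv_sq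
  have hs1 : iteratedDeriv 1 (fun z => 1 - q z ^ 2) x = 0 := by
    rw [iteratedDeriv_const_sub one_pos, iteratedDeriv_neg, hq1, hqx]; simp
  have h1 : iteratedDeriv 1 q x = iteratedDeriv 1 w x := by
    simpa [hqx] using hleib 0
  have hs2 : iteratedDeriv 2 (fun z => 1 - q z ^ 2) x = -2 * iteratedDeriv 1 w x ^ 2 := by
    rw [iteratedDeriv_const_sub two_pos, iteratedDeriv_neg, hq2, hqx, h1]; ring
  have hs0 : iteratedDeriv 0 (fun z => 1 - q z ^ 2) x = 1 := by simp [hqx]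
  refine ⟨h1, ?_, ?_⟩
  · simpa [sum_range_succ, hs0, hs1] using hleib 1
  · rw [hleib 2]
    simp only [sum_range_succ, sum_range_zero, hs0, hs1, hs2, Nat.choose_zero_right,
      Nat.choose_self, Nat.reduceSub, Nat.reduceAdd, Nat.cast_one]
    ring

end Leibniz

namespace Complex

theorem hasDerivAt_tanh_s8 {z : ℂ} (hz : cosh z ≠ 0) : HasDerivAt tanh (1 - tanh z ^ 2) z := by
  have h := (hasDerivAt_sinh z).div (hasDerivAt_cosh z) hz
  rw [show sinh / cosh = tanh from funext fun w => (tanh_eq_sinh_div_cosh w).symm] at h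
  refine h.congr_deriv ?_
  rw [tanh_eq_sinh_div_cosh]
  field_simp

theorem one_add_tanh_ne_zero (z : ℂ) : 1 + tanh z ≠ 0 := by
  rw [tanh_eq_sinh_div_cosh]
  rcases eq_or_ne (cosh z) 0 with h | h
  · simp [h]
  · rw [one_add_div h, cosh_add_sinh]
    exact div_ne_zero (exp_ne_zero z) h

end Complex

theorem psqrt_sq {w : ℂ} (hw : w ≠ 0) : psqrt w ^ 2 = w := by
  rw [psqrt, ← Complex.exp_nat_mul, ← mul_assoc]
  norm_num [Complex.exp_log hw]

theorem zalcman_eq_of_sq_deriv_eq_one_add_tanh {f ω : ℂ → ℂ} (hf : AnalyticAt ℂ f 0)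
    (hω : AnalyticAt ℂ ω 0) (hω0 : ω 0 = 0) (hf1 : deriv f 0 = 1)
    (h : ∀ᶠ z in 𝓝 0, deriv f z ^ 2 = 1 + tanh (ω z)) :
    tCoeff f 2 * tCoeff f 3 - tCoeff f 4 =
      5 / 48 * tCoeff ω 1 * tCoeff ω 2 + tCoeff ω 1 ^ 3 / 64 - tCoeff ω 3 / 8 := by
  set g := deriv f
  set q := fun z => -1 + g z ^ 2
  have hg : AnalyticAt ℂ g 0 := hf.deriv
  have hqt : q =ᶠ[𝓝 0] fun z => tanh (ω z) := h.mono fun z hz => by simp [q, hz]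
  have hcosh : ∀ᶠ z in 𝓝 0, cosh (ω z) ≠ 0 :=
    (continuous_cosh.continuousAt.comp hω.continuousAt).eventually_ne (by simp [hω0])
  have hode : deriv q =ᶠ[𝓝 0] fun z => (1 - q z ^ 2) * deriv ω z := by
    filter_upwards [hqt.deriv, hqt, hcosh, hω.eventually_analyticAt] with z hdq hqz hz hωz
    rw [hdq, hqz]
    exact ((hasDerivAt_tanh_s8 hz).comp z hωz.differentiableAt.hasDerivAt).deriv
  obtain ⟨hW1, hW2, hW3⟩ := iteratedDeriv_eq_of_deriv_eq_one_sub_sq_mul_deriv (q := q)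
    (analyticAt_const.add (hg.pow 2)) hω (by simp [q, hf1]) hode
  obtain ⟨hS1, hS2, hS3⟩ := hg.iteratedDeriv_sq
  simp only [q, iteratedDeriv_const_add one_pos, iteratedDeriv_const_add two_pos,
    iteratedDeriv_const_add three_pos, hS1, hS2, hS3, hf1] at hW1 hW2 hW3
  have hT (n : ℕ) : tCoeff f (n + 1) = iteratedDeriv n g 0 / (n + 1)! := by
    rw [tCoeff, iteratedDeriv_succ']
  rw [← hW1] at hW3
  rw [hT 1, hT 2, hT 3, tCoeff, tCoeff, tCoeff, ← hW1, ← hW2]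
  push_cast [Nat.factorial]
  linear_combination (-1 / 48 : ℂ) * hW3

theorem fourierCoeffOn_comp_circleMap {f : ℂ → ℂ} {c : ℂ} {r : ℝ} (hr : 0 < r)
    (hf : DifferentiableOn ℂ f (closedBall c r)) (n : ℕ) :
    fourierCoeffOn two_pi_pos (fun θ => f (circleMap c r θ)) n =
      r ^ n * (iteratedDeriv n f c / n !) := by
  have hintegrand (θ : ℝ) : deriv (circleMap c r) θ • (1 / (circleMap c r θ - c) ^ (n + 1)) •
      f (circleMap c r θ) = I * ((r : ℂ) ^ n)⁻¹ *
        (fourier (-(n : ℤ)) (θ : AddCircle (2 * π)) • f (circleMap c r θ)) := by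
    have hexp : 2 * π * I * ((-(n : ℤ) : ℤ) : ℂ) * θ / ((2 * π : ℝ) : ℂ) = -(n * (θ * I)) := by
      push_cast; field_simp
    rw [deriv_circleMap, circleMap_sub_center, circleMap_zero, fourier_coe_apply, hexp,
      Complex.exp_neg, Complex.exp_nat_mul, smul_eq_mul, smul_eq_mul, smul_eq_mul]
    have : cexp (θ * I) ≠ 0 := Complex.exp_ne_zero _
    have : (r : ℂ) ≠ 0 := by exact_mod_cast hr.ne'
    field_simp; ring
  have hcauchy := hf.circleIntegral_one_div_sub_center_pow_smul hr n
  simp only [circleIntegral, hintegrand] at hcauchy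
  rw [intervalIntegral.integral_const_mul, smul_eq_mul] at hcauchy
  have hr : (r : ℂ) ≠ 0 := by exact_mod_cast hr.ne'
  have hπ : (π : ℂ) ≠ 0 := by exact_mod_cast pi_ne_zero
  rw [fourierCoeffOn_eq_integral, sub_zero, Complex.real_smul]
  push_cast
  field_simp at hcauchy ⊢
  exact hcauchy

theorem sum_sq_norm_fourierCoeffOn_le {a b : ℝ} (hab : a < b) {f : ℝ → ℂ} (hf : Continuous f)
    {M : ℝ} (hM : ∀ x, ‖f x‖ ≤ M) (s : Finset ℤ) :
    ∑ n ∈ s, ‖fourierCoeffOn hab f n‖ ^ 2 ≤ M ^ 2 := by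
  have hL2 : MemLp f 2 (volume.restrict (Set.Ioc a b)) :=
    .of_bound hf.aestronglyMeasurable M (ae_of_all _ hM)
  calc ∑ n ∈ s, ‖fourierCoeffOn hab f n‖ ^ 2
      ≤ (b - a)⁻¹ • ∫ x in a..b, ‖f x‖ ^ 2 :=
        sum_le_hasSum s (fun _ _ => by positivity) (hasSum_sq_fourierCoeffOn hab hL2)
    _ ≤ (b - a)⁻¹ • ∫ _ in a..b, M ^ 2 := by
        gcongr
        exact intervalIntegral.integral_mono_on hab.le
          ((hf.norm.pow 2).intervalIntegrable a b) intervalIntegrable_const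
          fun x _ => pow_le_pow_left₀ (norm_nonneg _) (hM x) 2
    _ = M ^ 2 := by
        rw [intervalIntegral.integral_const, smul_eq_mul, smul_eq_mul]
        field_simp [(sub_pos.2 hab).ne']

theorem sum_sq_norm_taylorCoeff_mul_pow_le {f : ℂ → ℂ} {c : ℂ} {R M : ℝ} (hR : 0 < R)
    (hf : DifferentiableOn ℂ f (ball c R)) (hM : ∀ z ∈ ball c R, ‖f z‖ ≤ M) (s : Finset ℕ) :
    ∑ n ∈ s, ‖iteratedDeriv n f c / (n !)‖ ^ 2 * R ^ (2 * n) ≤ M ^ 2 := by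
  have hr (r : ℝ) (hr : r ∈ Set.Ioo 0 R) :
      ∑ n ∈ s, ‖iteratedDeriv n f c / (n !)‖ ^ 2 * r ^ (2 * n) ≤ M ^ 2 := by
    have hsub : closedBall c r ⊆ ball c R := closedBall_subset_ball hr.2
    have hsphere (θ : ℝ) : circleMap c r θ ∈ ball c R :=
      hsub (sphere_subset_closedBall (circleMap_mem_sphere c hr.1.le θ))
    have hcont : Continuous fun θ => f (circleMap c r θ) :=
      hf.continuousOn.comp_continuous (continuous_circleMap c r) hsphere
    have := sum_sq_norm_fourierCoeffOn_le two_pi_pos hcont (fun θ => hM _ (hsphere θ))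
      (s.map Nat.castEmbedding)
    rw [sum_map] at this
    simp only [Nat.castEmbedding_apply, fourierCoeffOn_comp_circleMap hr.1 (hf.mono hsub)] at this
    simpa [mul_pow, pow_mul, abs_of_pos hr.1, mul_comm] using this
  have hlim : Tendsto (fun r => ∑ n ∈ s, ‖iteratedDeriv n f c / (n !)‖ ^ 2 * r ^ (2 * n))
      (𝓝[<] R) (𝓝 (∑ n ∈ s, ‖iteratedDeriv n f c / (n !)‖ ^ 2 * R ^ (2 * n))) :=
    (Continuous.tendsto (by fun_prop) R).mono_left nhdsWithin_le_nhds
  exact le_of_tendsto hlim (mem_of_superset (Ioo_mem_nhdsLT hR) hr)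

theorem le_one_div_eight_of_sq_add_sq_add_sq_le_one {x y z : ℝ} (hx : 0 ≤ x)
    (h : x ^ 2 + y ^ 2 + z ^ 2 ≤ 1) :
    5 / 48 * x * y + x ^ 3 / 64 + z / 8 ≤ 1 / 8 := by
  have hx1 : x ≤ 1 := by nlinarith
  nlinarith [sq_nonneg (y - 5 * x / 6), sq_nonneg (1 - z),
    mul_nonneg (mul_nonneg hx hx) (sub_nonneg.2 hx1), sq_nonneg x, sq_nonneg y]

theorem BTB_zalcman_bound (f : ℂ → ℂ) (hf : IsBTB f) :
    ‖tCoeff f 2 * tCoeff f 3 - tCoeff f 4‖ ≤ 1/8 := by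
  obtain ⟨hfa, -, hf1, -, ω, hωa, hω0, hωb, hf'⟩ := hf
  have h0 : (0 : ℂ) ∈ ball 0 1 := mem_ball_self one_pos
  have hsq : ∀ᶠ z in 𝓝 0, deriv f z ^ 2 = 1 + tanh (ω z) :=
    eventually_of_mem (ball_mem_nhds 0 one_pos) fun z hz => by
      rw [hf' z hz, psqrt_sq (one_add_tanh_ne_zero _)]
  rw [zalcman_eq_of_sq_deriv_eq_one_add_tanh (hfa 0 h0) (hωa 0 h0) hω0 hf1 hsq]
  have hparseval := sum_sq_norm_taylorCoeff_mul_pow_le one_pos hωa.differentiableOn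
    (fun z hz => (hωb z hz).le) {1, 2, 3}
  calc ‖5 / 48 * tCoeff ω 1 * tCoeff ω 2 + tCoeff ω 1 ^ 3 / 64 - tCoeff ω 3 / 8‖
      ≤ 5 / 48 * ‖tCoeff ω 1‖ * ‖tCoeff ω 2‖ + ‖tCoeff ω 1‖ ^ 3 / 64 + ‖tCoeff ω 3‖ / 8 := by
        refine (norm_sub_le _ _).trans ((add_le_add_left (norm_add_le _ _) _).trans (le_of_eq ?_))
        simp
    _ ≤ 1 / 8 := le_one_div_eight_of_sq_add_sq_add_sq_le_one (norm_nonneg _)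
        (by simpa [tCoeff, add_assoc] using hparseval)
end
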